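/- Let n, N be positive integers, let E ∈ ℝ^{n×N}, let d ∈ ℝ^n with ‖d‖₂ = 1, and let λ, L be reals with 0 < λ < L. Then the function c ↦ ‖E − d cᵀ‖_F² + λ² ‖c‖₀ has a unique global minimizer over the set {c ∈ ℝ^N : ‖c‖_∞ ≤ L} if and only if the vector Eᵀd has no entry whose absolute value equals λ. -/

import Mathlib

open Finset Matrix

noncomputable def frobSq {n N : ℕ} (M : Matrix (Fin n) (Fin N) ℝ) : ℝ :=
  ∑ i, ∑ j, (M i j) ^ 2

noncomputable def l0 {N : ℕ} (c : Fin N → ℝ) : ℕ :=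
  (Finset.univ.filter (fun i => c i ≠ 0)).card

noncomputable def outer {n N : ℕ} (d : Fin n → ℝ) (c : Fin N → ℝ) :
    Matrix (Fin n) (Fin N) ℝ :=
  Matrix.of fun i j => d i * c j

/-!
Since `‖d‖₂ = 1`, the objective equals `‖E‖_F² + ∑ⱼ g_{bⱼ}(cⱼ)` with `b = Eᵀd` and
`g_b(t) = t² - 2bt + λ²·[t ≠ 0]`. It separates over the coordinates, so it has a unique
minimizer on the box iff every `g_{bⱼ}` has a unique minimizer on `[-L, L]`.
On `t ≠ 0` we have `g_b(t) = (t - b)² + λ² - b²`, while `g_b(0) = 0`. If `|b| < λ`, the point `0`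
is the strict minimizer; if `|b| > λ`, the projection of `b` onto `[-L, L]` is, its cost being
negative because `λ < L`; if `|b| = λ`, both `0` and `b` attain the minimum value `0`.
-/

section Separable

variable {ι M : Type*} {β : ι → Type*} [Fintype ι]
  [AddCommMonoid M] [PartialOrder M] [IsOrderedCancelAddMonoid M]
  {S : ∀ j, Set (β j)} {G : ∀ j, β j → M}

theorem isMinOn_sum_pi_iff {c : ∀ j, β j} (hc : c ∈ Set.univ.pi S) :
    IsMinOn (fun x => ∑ j, G j (x j)) (Set.univ.pi S) c ↔ ∀ j, IsMinOn (G j) (S j) (c j) := by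
  classical
  refine ⟨fun h j t ht => ?_, fun h x hx => Finset.sum_le_sum fun j _ => h j (hx j trivial)⟩
  have hle := isMinOn_iff.1 h _ ((Set.update_mem_pi_iff_of_mem hc).2 fun _ => ht)
  simp only [← Finset.add_sum_erase _ _ (Finset.mem_univ j), Function.update_self] at hle
  have herase :
      ∑ k ∈ univ.erase j, G k (Function.update c j t k) = ∑ k ∈ univ.erase j, G k (c k) :=
    Finset.sum_congr rfl fun k hk => by rw [Function.update_of_ne (Finset.ne_of_mem_erase hk)]
  rwa [herase, add_le_add_iff_right] at hle

theorem existsUnique_isMinOn_sum_pi_iff :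
    (∃! c, c ∈ Set.univ.pi S ∧ IsMinOn (fun x => ∑ j, G j (x j)) (Set.univ.pi S) c) ↔
      ∀ j, ∃! t, t ∈ S j ∧ IsMinOn (G j) (S j) t := by
  classical
  constructor
  · rintro ⟨c, ⟨hc, hmin⟩, huniq⟩ j
    have hcoord := (isMinOn_sum_pi_iff hc).1 hmin
    refine ⟨c j, ⟨hc j trivial, hcoord j⟩, fun t ⟨ht, htmin⟩ => ?_⟩
    have hupd : Function.update c j t ∈ Set.univ.pi S :=
      (Set.update_mem_pi_iff_of_mem hc).2 fun _ => ht
    have hupd_min :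
        IsMinOn (fun x => ∑ j, G j (x j)) (Set.univ.pi S) (Function.update c j t) := by
      refine (isMinOn_sum_pi_iff hupd).2 fun k => ?_
      rcases eq_or_ne k j with rfl | hk
      · simpa using htmin
      · simpa [hk] using hcoord k
    simpa using congr_fun (huniq _ ⟨hupd, hupd_min⟩) j
  · intro h
    choose c hc huniq using h
    have hc_mem : c ∈ Set.univ.pi S := fun j _ => (hc j).1
    refine ⟨c, ⟨hc_mem, (isMinOn_sum_pi_iff hc_mem).2 fun j => (hc j).2⟩, fun x ⟨hx, hxmin⟩ => ?_⟩
    exact funext fun j => huniq j _ ⟨hx j trivial, (isMinOn_sum_pi_iff hx).1 hxmin j⟩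

end Separable

theorem existsUnique_isMinOn_of_forall_lt {α β : Type*} [Preorder β] {f : α → β} {s : Set α}
    {a : α} (ha : a ∈ s) (h : ∀ x ∈ s, x ≠ a → f a < f x) :
    ∃! x, x ∈ s ∧ IsMinOn f s x := by
  refine ⟨a, ⟨ha, fun x hx => ?_⟩, fun x ⟨hx, hmin⟩ => ?_⟩
  · rcases eq_or_ne x a with rfl | hne
    · exact le_rfl
    · exact (h x hx hne).le
  · by_contra hne
    exact (h x hx hne).not_ge (hmin ha)

section PenalizedCost

noncomputable def penalizedCost (lam b t : ℝ) : ℝ :=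
  t ^ 2 - 2 * b * t + if t = 0 then 0 else lam ^ 2

variable {lam L b t : ℝ}

@[simp]
theorem penalizedCost_zero : penalizedCost lam b 0 = 0 := by
  simp [penalizedCost]

theorem penalizedCost_of_ne_zero (ht : t ≠ 0) :
    penalizedCost lam b t = t ^ 2 - 2 * b * t + lam ^ 2 := by
  simp [penalizedCost, ht]

theorem penalizedCost_neg : penalizedCost lam (-b) (-t) = penalizedCost lam b t := by
  simp [penalizedCost]

theorem penalizedCost_self_of_abs_eq (hb : |b| = lam) : penalizedCost lam b b = 0 := by
  rcases eq_or_ne b 0 with rfl | hb0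
  · exact penalizedCost_zero
  · rw [penalizedCost_of_ne_zero hb0, ← hb, sq_abs]
    ring

theorem penalizedCost_nonneg (hb : |b| ≤ lam) : 0 ≤ penalizedCost lam b t := by
  rcases eq_or_ne t 0 with rfl | ht
  · simp
  · rw [penalizedCost_of_ne_zero ht]
    nlinarith [sq_nonneg (t - b), sq_abs b, abs_nonneg b]

theorem penalizedCost_pos (hb : |b| < lam) (ht : t ≠ 0) : 0 < penalizedCost lam b t := by
  rw [penalizedCost_of_ne_zero ht]
  nlinarith [sq_nonneg (t - b), sq_abs b, abs_nonneg b]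

theorem penalizedCost_min_lt (hlam : 0 < lam) (hL : lam < L) (hb : lam < b)
    (ht : t ∈ Set.Icc (-L) L) (hne : t ≠ min b L) :
    penalizedCost lam b (min b L) < penalizedCost lam b t := by
  obtain ⟨htl, htu⟩ := ht
  have hp : lam < min b L := lt_min hb hL
  rw [penalizedCost_of_ne_zero (by linarith)]
  rcases eq_or_ne t 0 with rfl | ht0
  · rw [penalizedCost_zero]
    nlinarith [min_le_left b L]
  · rw [penalizedCost_of_ne_zero ht0]
    rcases min_cases b L with ⟨hmin, -⟩ | ⟨hmin, hbL⟩ <;> rw [hmin] at hne ⊢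
    · nlinarith [sq_pos_of_ne_zero (sub_ne_zero.2 hne)]
    · nlinarith [lt_of_le_of_ne htu hne]

theorem existsUnique_isMinOn_penalizedCost_iff (hlam : 0 < lam) (hL : lam < L) :
    (∃! t, t ∈ Set.Icc (-L) L ∧ IsMinOn (penalizedCost lam b) (Set.Icc (-L) L) t) ↔
      |b| ≠ lam := by
  have hL0 : 0 < L := hlam.trans hL
  refine ⟨fun h hb => ?_, fun hb => ?_⟩
  · have hb0 : b ≠ 0 := by
      rintro rfl
      simp only [abs_zero] at hb
      exact hlam.ne hb
    have hmin : ∀ t, penalizedCost lam b t = 0 →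
        IsMinOn (penalizedCost lam b) (Set.Icc (-L) L) t :=
      fun t ht s _ => ht ▸ penalizedCost_nonneg hb.le
    refine hb0 (h.unique ⟨?_, hmin b (penalizedCost_self_of_abs_eq hb)⟩
      ⟨⟨by linarith, hL0.le⟩, hmin 0 penalizedCost_zero⟩)
    exact abs_le.1 (hb.trans_le hL.le)
  rcases hb.lt_or_gt with hb | hb
  · refine existsUnique_isMinOn_of_forall_lt ⟨by linarith, hL0.le⟩ fun t _ ht => ?_
    simpa using penalizedCost_pos hb ht
  rcases lt_abs.1 hb with hb | hb
  · refine existsUnique_isMinOn_of_forall_lt ⟨?_, min_le_right b L⟩ fun t ht hne =>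
      penalizedCost_min_lt hlam hL hb ht hne
    linarith [lt_min hb hL]
  · refine existsUnique_isMinOn_of_forall_lt (a := -min (-b) L) ⟨?_, ?_⟩
      fun t ht hne => ?_
    · simp
    · linarith [lt_min hb hL]
    · rw [← penalizedCost_neg, neg_neg, ← penalizedCost_neg (t := t)]
      exact penalizedCost_min_lt hlam hL hb ⟨by linarith [ht.2], by linarith [ht.1]⟩
        fun h => hne (neg_eq_iff_eq_neg.1 h)

end PenalizedCost

theorem natCast_l0 {N : ℕ} (c : Fin N → ℝ) : (l0 c : ℝ) = ∑ j, if c j = 0 then 0 else 1 := by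
  simp [l0, Finset.card_filter, ite_not]

theorem frobSq_sub_outer {n N : ℕ} (E : Matrix (Fin n) (Fin N) ℝ) (d : Fin n → ℝ)
    (c : Fin N → ℝ) :
    frobSq (E - outer d c) =
      frobSq E + ∑ j, ((∑ i, d i ^ 2) * c j ^ 2 - 2 * (Eᵀ *ᵥ d) j * c j) := by
  simp only [frobSq, Finset.sum_comm (γ := Fin n), ← Finset.sum_add_distrib, Matrix.mulVec,
    dotProduct, Matrix.transpose_apply, Finset.sum_mul, Finset.mul_sum, ← Finset.sum_sub_distrib]
  refine Finset.sum_congr rfl fun j _ => Finset.sum_congr rfl fun i _ => ?_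
  simp only [Matrix.sub_apply, outer, Matrix.of_apply]
  ring

theorem objective_eq_add_sum_penalizedCost {n N : ℕ} (E : Matrix (Fin n) (Fin N) ℝ)
    {d : Fin n → ℝ} (hd : ∑ i, d i ^ 2 = 1) (lam : ℝ) (c : Fin N → ℝ) :
    frobSq (E - outer d c) + lam ^ 2 * (l0 c : ℝ) =
      frobSq E + ∑ j, penalizedCost lam ((Eᵀ *ᵥ d) j) (c j) := by
  rw [frobSq_sub_outer, natCast_l0, hd, Finset.mul_sum, add_assoc, ← Finset.sum_add_distrib]
  simp only [penalizedCost, mul_ite, mul_zero, mul_one, one_mul]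

theorem stmt1_general {n N : ℕ}
    (E : Matrix (Fin n) (Fin N) ℝ) (d : Fin n → ℝ)
    (hd : Real.sqrt (∑ i, (d i) ^ 2) = 1)
    (lam L : ℝ) (hlam : 0 < lam) (hL : lam < L) :
    (∃! c : Fin N → ℝ, (∀ i, |c i| ≤ L) ∧
        ∀ c' : Fin N → ℝ, (∀ i, |c' i| ≤ L) →
          frobSq (E - outer d c) + lam ^ 2 * (l0 c : ℝ) ≤
          frobSq (E - outer d c') + lam ^ 2 * (l0 c' : ℝ)) ↔
    (∀ j, |Eᵀ.mulVec d j| ≠ lam) := by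
  have hbox : ∀ c : Fin N → ℝ, (∀ i, |c i| ≤ L) ↔ c ∈ Set.univ.pi fun _ => Set.Icc (-L) L := by
    simp only [Set.mem_univ_pi, Set.mem_Icc, abs_le, implies_true]
  calc _ ↔ ∃! c, c ∈ Set.univ.pi (fun _ => Set.Icc (-L) L) ∧
        IsMinOn (fun c : Fin N → ℝ => ∑ j, penalizedCost lam ((Eᵀ *ᵥ d) j) (c j))
          (Set.univ.pi fun _ => Set.Icc (-L) L) c := by
        refine existsUnique_congr fun c => ?_
        simp only [isMinOn_iff, ← hbox, objective_eq_add_sum_penalizedCost E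
          (Real.sqrt_eq_one.mp hd), add_le_add_iff_left]
    _ ↔ _ := existsUnique_isMinOn_sum_pi_iff
    _ ↔ _ := forall_congr' fun j => existsUnique_isMinOn_penalizedCost_iff hlam hL

theorem stmt1 {n N : ℕ} (hn : 0 < n) (hN : 0 < N)
    (E : Matrix (Fin n) (Fin N) ℝ) (d : Fin n → ℝ)
    (hd : Real.sqrt (∑ i, (d i) ^ 2) = 1)
    (lam L : ℝ) (hlam : 0 < lam) (hL : lam < L) :
    (∃! c : Fin N → ℝ, (∀ i, |c i| ≤ L) ∧
        ∀ c' : Fin N → ℝ, (∀ i, |c' i| ≤ L) →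
          frobSq (E - outer d c) + lam ^ 2 * (l0 c : ℝ) ≤
          frobSq (E - outer d c') + lam ^ 2 * (l0 c' : ℝ)) ↔
    (∀ j, |Eᵀ.mulVec d j| ≠ lam) :=
  stmt1_general E d hd lam L hlam hL
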